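/- arXiv:1511.00382 — 2 statements merged into one kernel-verified Lean document; each statement's English description precedes it below -/
import Mathlib

section
/- Let g(x) = 1 - x² for x ∈ ℝ, and let 0 < c < d < ∞. Then g(c) ≥ (1/γ₁([c,d])) ∫_c^d g(x) dγ₁(x) ≥ g(d - (d-c)/3). -/
open MeasureTheory Real
open scoped ENNReal NNReal

/-- The standard Gaussian measure on `ℝ`, `dγ₁(x) = (2π)^{-1/2} e^{-x²/2} dx`. -/
noncomputable def gamma1 : Measure ℝ :=
  volume.withDensity (fun x => ENNReal.ofReal ((2 * π) ^ (-(1 : ℝ) / 2) * Real.exp (-x ^ 2 / 2)))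

/-- for `g(x) = 1 - x²` and `0 < c < d < ∞`,
`g(c) ≥ (1/γ₁([c,d])) ∫_c^d g dγ₁ ≥ g(d - (d-c)/3)`. -/
theorem stmt3 (c d : ℝ) (hc : 0 < c) (hcd : c < d) :
    (1 - c ^ 2) ≥ (gamma1 (Set.Icc c d)).toReal⁻¹ * ∫ x in Set.Icc c d, (1 - x ^ 2) ∂gamma1 ∧
    (gamma1 (Set.Icc c d)).toReal⁻¹ * (∫ x in Set.Icc c d, (1 - x ^ 2) ∂gamma1)
      ≥ 1 - (d - (d - c) / 3) ^ 2 := by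
  set w : ℝ → ℝ := fun x => (2 * π) ^ (-(1 : ℝ) / 2) * Real.exp (-x ^ 2 / 2) with hw
  have hwpos : ∀ x, 0 < w x := fun x =>
    mul_pos (rpow_pos_of_pos (by positivity) _) (exp_pos _)
  have hwcont : Continuous w := by
    apply continuous_const.mul
    exact Real.continuous_exp.comp ((continuous_pow 2).neg.div_const 2)
  have hwmono : ∀ x y : ℝ, 0 ≤ x → x ≤ y → w y ≤ w x := by
    intro x y hx hxy
    apply mul_le_mul_of_nonneg_left _ (le_of_lt (rpow_pos_of_pos (by positivity) _))
    apply exp_le_exp.mpr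
    nlinarith
  set m := d - (d - c) / 3 with hm
  have hcm : c ≤ m := by rw [hm]; linarith
  have hmd : m ≤ d := by rw [hm]; linarith
  have hm0 : 0 < m := lt_of_lt_of_le hc hcm
  -- rewrite the gamma1 integral as a Lebesgue integral
  have hmeas : Measurable (fun x => (w x).toNNReal) :=
    hwcont.measurable.real_toNNReal
  have hrw : ∀ f : ℝ → ℝ, (∫ x in Set.Icc c d, f x ∂gamma1) = ∫ x in Set.Icc c d, w x * f x := by
    intro f
    rw [show (∫ x in Set.Icc c d, f x ∂gamma1) = ∫ x, f x ∂(gamma1.restrict (Set.Icc c d))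
      from rfl]
    rw [gamma1, restrict_withDensity measurableSet_Icc]
    rw [show (fun x => ENNReal.ofReal ((2 * π) ^ (-(1 : ℝ) / 2) * Real.exp (-x ^ 2 / 2)))
        = fun x => ((w x).toNNReal : ℝ≥0∞) from rfl]
    rw [integral_withDensity_eq_integral_smul hmeas]
    congr 1
    ext x
    simp [NNReal.smul_def, Real.coe_toNNReal _ (hwpos x).le]
  -- the total mass
  have hwint : IntegrableOn w (Set.Icc c d) volume := hwcont.integrableOn_Icc
  set W : ℝ := ∫ x in Set.Icc c d, w x with hWdef
  have hmass : (gamma1 (Set.Icc c d)).toReal = W := by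
    rw [gamma1, withDensity_apply _ measurableSet_Icc,
      ← ofReal_integral_eq_lintegral_ofReal hwint
        (Filter.Eventually.of_forall fun x => (hwpos x).le)]
    exact ENNReal.toReal_ofReal (integral_nonneg fun x => (hwpos x).le)
  have hWpos : 0 < W := by
    have h1 : ∫ x in Set.Icc c d, w d ∂volume ≤ W :=
      setIntegral_mono_on (integrableOn_const (by simp))
        hwint measurableSet_Icc (fun x hx => hwmono x d (hc.le.trans hx.1) hx.2)
    rw [setIntegral_const, measureReal_def, Real.volume_Icc, ENNReal.toReal_ofReal (by linarith),
      smul_eq_mul] at h1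
    have : 0 < (d - c) * w d := mul_pos (by linarith) (hwpos d)
    linarith
  -- integrability facts
  have hint1 : IntegrableOn (fun x => w x * (1 - x ^ 2)) (Set.Icc c d) volume :=
    (hwcont.mul (continuous_const.sub (continuous_pow 2))).integrableOn_Icc
  have hint2 : IntegrableOn (fun x => w x * (1 - m ^ 2)) (Set.Icc c d) volume :=
    (hwcont.mul continuous_const).integrableOn_Icc
  have hint3 : IntegrableOn (fun x => w x * (m ^ 2 - x ^ 2)) (Set.Icc c d) volume :=
    (hwcont.mul (continuous_const.sub (continuous_pow 2))).integrableOn_Icc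
  have hint4 : IntegrableOn (fun x => w m * (m ^ 2 - x ^ 2)) (Set.Icc c d) volume :=
    (continuous_const.mul (continuous_const.sub (continuous_pow 2))).integrableOn_Icc
  -- upper bound
  have hA : (∫ x in Set.Icc c d, w x * (1 - x ^ 2)) ≤ (1 - c ^ 2) * W := by
    have : (∫ x in Set.Icc c d, w x * (1 - x ^ 2))
        ≤ ∫ x in Set.Icc c d, (1 - c ^ 2) * w x := by
      apply setIntegral_mono_on hint1 ((continuous_const.mul hwcont).integrableOn_Icc)
        measurableSet_Icc
      intro x hx
      have hx2 : c ^ 2 ≤ x ^ 2 := by nlinarith [hx.1]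
      show w x * (1 - x ^ 2) ≤ (1 - c ^ 2) * w x
      nlinarith [(hwpos x).le]
    rwa [integral_const_mul] at this
  -- lower bound
  have hkey : 0 ≤ ∫ x in Set.Icc c d, w x * (m ^ 2 - x ^ 2) := by
    have h1 : (∫ x in Set.Icc c d, w m * (m ^ 2 - x ^ 2))
        ≤ ∫ x in Set.Icc c d, w x * (m ^ 2 - x ^ 2) := by
      apply setIntegral_mono_on hint4 hint3 measurableSet_Icc
      intro x hx
      rcases le_total x m with h | h
      · have h1 : 0 ≤ m ^ 2 - x ^ 2 := by nlinarith [hx.1]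
        have h2 : w m ≤ w x := hwmono x m (hc.le.trans hx.1) h
        nlinarith
      · have h1 : m ^ 2 - x ^ 2 ≤ 0 := by nlinarith
        have h2 : w x ≤ w m := hwmono m x hm0.le h
        nlinarith
    have h2 : 0 ≤ ∫ x in Set.Icc c d, (m ^ 2 - x ^ 2) ∂volume := by
      rw [integral_Icc_eq_integral_Ioc, ← intervalIntegral.integral_of_le hcd.le]
      have : ∫ x in c..d, (m ^ 2 - x ^ 2) = m ^ 2 * (d - c) - (d ^ 3 - c ^ 3) / 3 := by
        rw [intervalIntegral.integral_sub intervalIntegrable_const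
          ((continuous_pow 2).intervalIntegrable c d)]
        rw [intervalIntegral.integral_const, integral_pow]
        norm_num
        ring
      rw [this, hm]
      nlinarith [mul_nonneg (mul_nonneg (sub_pos.mpr hcd).le (sub_pos.mpr hcd).le)
        (by linarith : (0:ℝ) ≤ d + 2 * c)]
    calc (0:ℝ) ≤ w m * ∫ x in Set.Icc c d, (m ^ 2 - x ^ 2) ∂volume :=
          mul_nonneg (hwpos m).le h2
      _ = ∫ x in Set.Icc c d, w m * (m ^ 2 - x ^ 2) := (integral_const_mul _ _).symm
      _ ≤ _ := h1
  have hB : (1 - m ^ 2) * W ≤ ∫ x in Set.Icc c d, w x * (1 - x ^ 2) := by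
    have hsplit : (∫ x in Set.Icc c d, w x * (1 - x ^ 2))
        = (∫ x in Set.Icc c d, w x * (1 - m ^ 2))
          + ∫ x in Set.Icc c d, w x * (m ^ 2 - x ^ 2) := by
      rw [← integral_add hint2 hint3]
      congr 1
      ext x
      ring
    rw [hsplit]
    have : (∫ x in Set.Icc c d, w x * (1 - m ^ 2)) = (1 - m ^ 2) * W := by
      rw [hWdef, ← integral_const_mul]
      congr 1
      ext x
      ring
    rw [this]
    linarith
  rw [hrw, hmass]
  constructor
  · rw [ge_iff_le, inv_mul_le_iff₀ hWpos]
    calc (∫ x in Set.Icc c d, w x * (1 - x ^ 2)) ≤ (1 - c ^ 2) * W := hA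
      _ = W * (1 - c ^ 2) := by ring
  · rw [ge_iff_le, le_inv_mul_iff₀ hWpos]
    calc W * (1 - m ^ 2) = (1 - m ^ 2) * W := by ring
      _ ≤ _ := hB
end

section
/- Let n = 1, 0 < a < 1, and let B = B(0,r) ⊂ ℝ with γ₁(B) = a, so that ∫_ℝ 1_B(x) √2 h₂(x) dγ₁(x) equals the infimum of ∫_ℝ f(x) √2 h₂(x) dγ₁(x) over all measurable f : ℝ → [0,1] with ∫ f dγ₁ = a. Let ε > 0 and let B' ⊂ ℝ be a measurable set with γ₁(B') = a satisfying ∫_ℝ 1_{B'}(x) √2 h₂(x) dγ₁(x) < (inf over the same class of f of ∫_ℝ f √2 h₂ dγ₁) + ε a. Then ∫_ℝ |1_{B'}(x) - 1_B(x)| dγ₁(x) < 10 ε^{1/2}. -/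
open MeasureTheory Real

/-- `√2 h₂(x)` where `h₂(x) = (x² - 1)/2`. -/
noncomputable def sqrt2h2 (x : ℝ) : ℝ := Real.sqrt 2 * ((x ^ 2 - 1) / 2)


noncomputable def phi (x : ℝ) : ℝ := (2 * π) ^ (-(1 : ℝ) / 2) * Real.exp (-x ^ 2 / 2)

lemma phi_pos (x : ℝ) : 0 < phi x := by
  have h2π : (0:ℝ) < 2 * π := by positivity
  exact mul_pos (Real.rpow_pos_of_pos h2π _) (Real.exp_pos _)

lemma phi_meas : Measurable phi := by unfold phi; fun_prop

lemma gamma1_def : gamma1 = volume.withDensity (fun x => ENNReal.ofReal (phi x)) := rfl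

lemma phi_zero_le : phi 0 ≤ 2/5 := by
  have hπ : (3.14:ℝ) ≤ π := by linarith [Real.pi_gt_d6]
  have h1 : ((5:ℝ)/2) ^ (2:ℕ) ≤ 2 * π := by norm_num; linarith
  have h2 : (5:ℝ)/2 ≤ (2*π) ^ ((1:ℝ)/2) := by
    calc (5:ℝ)/2 = (((5:ℝ)/2) ^ (2:ℕ)) ^ ((1:ℝ)/2) := by
          rw [← Real.rpow_natCast ((5:ℝ)/2) 2, ← Real.rpow_mul (by norm_num)]
          norm_num
      _ ≤ (2*π) ^ ((1:ℝ)/2) := by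
          rw [← Real.rpow_natCast ((5:ℝ)/2) 2]
          exact Real.rpow_le_rpow (by positivity) (by rw [Real.rpow_natCast]; exact h1) (by norm_num)
  have h2π : (0:ℝ) < 2 * π := by positivity
  have hrw : (2*π) ^ (-(1:ℝ)/2) = ((2*π) ^ ((1:ℝ)/2))⁻¹ := by
    rw [← Real.rpow_neg h2π.le]; norm_num
  have hp : (0:ℝ) < (2*π) ^ ((1:ℝ)/2) := Real.rpow_pos_of_pos h2π _
  unfold phi
  rw [hrw]
  have : ((2*π) ^ ((1:ℝ)/2))⁻¹ ≤ 2/5 := by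
    rw [inv_le_comm₀ (by positivity) (by norm_num)]
    calc (2/5:ℝ)⁻¹ = 5/2 := by norm_num
      _ ≤ _ := h2
  calc ((2*π) ^ ((1:ℝ)/2))⁻¹ * Real.exp (-0^2/2) = ((2*π) ^ ((1:ℝ)/2))⁻¹ := by
        norm_num
    _ ≤ 2/5 := this

lemma phi_mono {r x : ℝ} (h : r ≤ |x|) (hr : 0 ≤ r) : phi x ≤ phi r := by
  unfold phi
  have h2π : (0:ℝ) < (2*π) ^ (-(1:ℝ)/2) := Real.rpow_pos_of_pos (by positivity) _
  apply mul_le_mul_of_nonneg_left _ h2π.le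
  apply Real.exp_le_exp.2
  have : r^2 ≤ x^2 := by
    have := sq_abs x
    nlinarith [abs_nonneg x]
  linarith

lemma phi_le_phi_zero (x : ℝ) : phi x ≤ phi 0 := by
  simpa using phi_mono (abs_nonneg x) le_rfl

lemma phi_integrable : Integrable phi := by
  have := (integrable_exp_neg_mul_sq (by norm_num : (0:ℝ) < 1/2)).const_mul ((2 * π) ^ (-(1 : ℝ) / 2))
  apply this.congr
  filter_upwards with x
  unfold phi
  ring_nf

instance gamma1_finite : IsFiniteMeasure gamma1 := by
  rw [gamma1_def]
  exact isFiniteMeasure_withDensity_ofReal phi_integrable.2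

lemma gamma1_apply {s : Set ℝ} (hs : MeasurableSet s) :
    gamma1 s = ∫⁻ x in s, ENNReal.ofReal (phi x) := by
  rw [gamma1_def, withDensity_apply _ hs]

lemma gamma1_set_le {s : Set ℝ} (hs : MeasurableSet s) {c : ℝ}
    (hb : ∀ x ∈ s, phi x ≤ c) : gamma1 s ≤ ENNReal.ofReal c * volume s := by
  rw [gamma1_apply hs]
  calc ∫⁻ x in s, ENNReal.ofReal (phi x) ≤ ∫⁻ _ in s, ENNReal.ofReal c := by
        apply setLIntegral_mono measurable_const (fun x hx => ENNReal.ofReal_le_ofReal (hb x hx))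
    _ = ENNReal.ofReal c * volume s := by rw [setLIntegral_const]

lemma sqrt2h2_integrable : Integrable sqrt2h2 gamma1 := by
  rw [gamma1_def, integrable_withDensity_iff phi_meas.ennreal_ofReal (by filter_upwards with x; exact ENNReal.ofReal_lt_top)]
  have h1 : Integrable (fun x : ℝ => x ^ 2 * Real.exp (-(1/2) * x^2)) := by
    have := integrable_rpow_mul_exp_neg_mul_sq (by norm_num : (0:ℝ) < 1/2) (by norm_num : (-1:ℝ) < 2)
    apply this.congr
    filter_upwards with x
    rw [show ((2:ℝ) = ((2:ℕ):ℝ)) by norm_num, Real.rpow_natCast]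
  have h2 : Integrable (fun x : ℝ => Real.exp (-(1/2) * x^2)) :=
    integrable_exp_neg_mul_sq (by norm_num)
  have := (h1.sub h2).const_mul (Real.sqrt 2 / 2 * (2 * π) ^ (-(1 : ℝ) / 2))
  apply this.congr
  filter_upwards with x
  have : ENNReal.toReal (ENNReal.ofReal (phi x)) = phi x := ENNReal.toReal_ofReal (phi_pos x).le
  unfold sqrt2h2
  show _ = sqrt2h2 x * (ENNReal.ofReal (phi x)).toReal
  rw [this]
  unfold sqrt2h2 phi
  simp only [Pi.sub_apply]
  have e : -(1/2) * x^2 = -x^2/2 := by ring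
  rw [e]; ring

set_option maxHeartbeats 1000000
/-- if `B = B(0,r)` with `γ₁(B) = a` minimizes the second Hermite–Fourier
coefficient among `f : ℝ → [0,1]` with `∫ f dγ₁ = a`, and a set `B'` of measure `a` nearly
attains this infimum (within `ε a`), then `∫ |1_{B'} − 1_B| dγ₁ < 10 √ε`. -/
theorem stmt4 (a r : ℝ) (ha : 0 < a) (ha1 : a < 1)
    (hB : gamma1 (Metric.ball (0 : ℝ) r) = ENNReal.ofReal a)
    (hmin : (∫ x in Metric.ball (0 : ℝ) r, sqrt2h2 x ∂gamma1)
      = sInf { y : ℝ | ∃ f : ℝ → ℝ, Measurable f ∧ (∀ x, f x ∈ Set.Icc (0 : ℝ) 1) ∧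
          (∫ x, f x ∂gamma1) = a ∧ y = ∫ x, f x * sqrt2h2 x ∂gamma1 })
    (ε : ℝ) (hε : 0 < ε) (B' : Set ℝ) (hB'm : MeasurableSet B')
    (hB'a : gamma1 B' = ENNReal.ofReal a)
    (hB'near : (∫ x in B', sqrt2h2 x ∂gamma1)
      < sInf { y : ℝ | ∃ f : ℝ → ℝ, Measurable f ∧ (∀ x, f x ∈ Set.Icc (0 : ℝ) 1) ∧
          (∫ x, f x ∂gamma1) = a ∧ y = ∫ x, f x * sqrt2h2 x ∂gamma1 } + ε * a) :
    (∫ x, |Set.indicator B' (fun _ => (1 : ℝ)) x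
        - Set.indicator (Metric.ball (0 : ℝ) r) (fun _ => (1 : ℝ)) x| ∂gamma1)
      < 10 * Real.sqrt ε := by
  classical
  set B : Set ℝ := Metric.ball (0 : ℝ) r with hBdef
  have hBm : MeasurableSet B := measurableSet_ball
  have hsqε : 0 < Real.sqrt ε := Real.sqrt_pos.2 hε
  -- r > 0
  have hr : 0 < r := by
    by_contra h
    push_neg at h
    have hBe : B = ∅ := Metric.ball_eq_empty.2 h
    rw [hBe, measure_empty] at hB
    have : ENNReal.ofReal a ≠ 0 := by
      simp [ENNReal.ofReal_eq_zero]; linarith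
    exact this hB.symm
  have hfin : ∀ s : Set ℝ, gamma1 s ≠ ⊤ := fun s => (measure_lt_top gamma1 s).ne
  set Dp : Set ℝ := B' \ B with hDpdef
  set Dm : Set ℝ := B \ B' with hDmdef
  have hDpm : MeasurableSet Dp := hB'm.diff hBm
  have hDmm : MeasurableSet Dm := hBm.diff hB'm
  -- equal measures of the two differences
  have hmeq : gamma1 Dp = gamma1 Dm := by
    have h1 : gamma1 (B' ∩ B) + gamma1 Dp = gamma1 B' := measure_inter_add_diff B' hBm
    have h2 : gamma1 (B ∩ B') + gamma1 Dm = gamma1 B := measure_inter_add_diff B hB'm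
    rw [Set.inter_comm] at h2
    rw [hB'a] at h1
    rw [hB] at h2
    have h3 : gamma1 (B' ∩ B) + gamma1 Dp = gamma1 (B' ∩ B) + gamma1 Dm := h1.trans h2.symm
    exact (ENNReal.add_right_inj (hfin _)).1 h3
  set m : ℝ := (gamma1 Dp).toReal with hmdef
  have hm0 : 0 ≤ m := ENNReal.toReal_nonneg
  have hmDm : (gamma1 Dm).toReal = m := by rw [← hmeq]
  -- the goal integral equals 2m
  have hptwise : ∀ x : ℝ, |Set.indicator B' (fun _ => (1 : ℝ)) x
        - Set.indicator B (fun _ => (1 : ℝ)) x|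
      = Set.indicator Dp (fun _ => (1 : ℝ)) x + Set.indicator Dm (fun _ => (1 : ℝ)) x := by
    intro x
    by_cases h1 : x ∈ B' <;> by_cases h2 : x ∈ B <;>
      simp [Set.indicator_apply, h1, h2, hDpdef, hDmdef]
  have hfinal : (∫ x, |Set.indicator B' (fun _ => (1 : ℝ)) x
        - Set.indicator B (fun _ => (1 : ℝ)) x| ∂gamma1) = m + m := by
    have : (∫ x, |Set.indicator B' (fun _ => (1 : ℝ)) x
        - Set.indicator B (fun _ => (1 : ℝ)) x| ∂gamma1)
        = ∫ x, (Set.indicator Dp (fun _ => (1 : ℝ)) x + Set.indicator Dm (fun _ => (1 : ℝ)) x) ∂gamma1 := by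
      apply integral_congr_ae
      filter_upwards with x using hptwise x
    rw [this, integral_add ((integrable_const (1:ℝ)).indicator hDpm)
        ((integrable_const (1:ℝ)).indicator hDmm),
      integral_indicator_const (1:ℝ) hDpm, integral_indicator_const (1:ℝ) hDmm]
    simp [hmDm, smul_eq_mul]
    rw [measureReal_def, measureReal_def, hmDm]
  rw [hfinal]
  -- trivial case m = 0
  by_cases hm : m = 0
  · rw [hm]; norm_num; positivity
  have hmpos : 0 < m := lt_of_le_of_ne hm0 (Ne.symm hm)
  -- excess estimate
  set c : ℝ := Real.sqrt 2 * ((r ^ 2 - 1) / 2) with hcdef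
  set g : ℝ → ℝ := fun x => sqrt2h2 x - c with hgdef
  have hgint : Integrable g gamma1 := sqrt2h2_integrable.sub (integrable_const c)
  have key : ∀ s : Set ℝ, ∫ x in s, sqrt2h2 x ∂gamma1
      = (∫ x in s, g x ∂gamma1) + c * (gamma1 s).toReal := by
    intro s
    have h1 : ∫ x in s, g x ∂gamma1
        = (∫ x in s, sqrt2h2 x ∂gamma1) - ∫ x in s, (fun _ => c) x ∂gamma1 :=
      integral_sub sqrt2h2_integrable.integrableOn (integrable_const c).integrableOn
    rw [h1, setIntegral_const, smul_eq_mul, measureReal_def]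
    ring
  have hexc : (∫ x in Dp, g x ∂gamma1) - (∫ x in Dm, g x ∂gamma1) < ε * a := by
    have hsplit1 : ∫ x in B', sqrt2h2 x ∂gamma1
        = (∫ x in B' ∩ B, sqrt2h2 x ∂gamma1) + ∫ x in Dp, sqrt2h2 x ∂gamma1 :=
      (integral_inter_add_diff hBm sqrt2h2_integrable.integrableOn).symm
    have hsplit2 : ∫ x in B, sqrt2h2 x ∂gamma1
        = (∫ x in B ∩ B', sqrt2h2 x ∂gamma1) + ∫ x in Dm, sqrt2h2 x ∂gamma1 :=
      (integral_inter_add_diff hB'm sqrt2h2_integrable.integrableOn).symm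
    rw [Set.inter_comm] at hsplit2
    have hnear : (∫ x in B', sqrt2h2 x ∂gamma1) < (∫ x in B, sqrt2h2 x ∂gamma1) + ε * a := by
      rw [hmin]; exact hB'near
    rw [hsplit1, hsplit2, key Dp, key Dm, hmDm] at hnear
    linarith
  -- g ≤ 0 on Dm
  have hDmneg : ∫ x in Dm, g x ∂gamma1 ≤ 0 := by
    apply setIntegral_nonpos hDmm
    intro x hx
    have hxB : x ∈ B := hx.1
    have : |x| < r := by
      rw [hBdef, mem_ball_zero_iff, Real.norm_eq_abs] at hxB; exact hxB
    have hx2 : x ^ 2 ≤ r ^ 2 := by nlinarith [abs_nonneg x, sq_abs x]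
    have hs2 : 0 ≤ Real.sqrt 2 := Real.sqrt_nonneg 2
    simp only [hgdef, hcdef]
    unfold sqrt2h2
    nlinarith
  -- g ≥ 0 on Dp
  have hDppos : ∀ x ∈ Dp, 0 ≤ g x := by
    intro x hx
    have hxB : x ∉ B := hx.2
    have hxr : r ≤ |x| := by
      rw [hBdef, mem_ball_zero_iff, Real.norm_eq_abs, not_lt] at hxB; exact hxB
    have hx2 : r ^ 2 ≤ x ^ 2 := by nlinarith [abs_nonneg x, sq_abs x]
    have hs2 : 0 ≤ Real.sqrt 2 := Real.sqrt_nonneg 2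
    simp only [hgdef, hcdef]
    unfold sqrt2h2
    nlinarith
  -- density bounds
  have hφr : 0 < phi r := phi_pos r
  have hφr25 : phi r ≤ 2 / 5 := (phi_le_phi_zero r).trans phi_zero_le
  set u : ℝ := m / (4 * phi r) with hudef
  have hu : 0 < u := div_pos hmpos (by nlinarith)
  -- annulus measure bound
  set A : Set ℝ := Metric.ball (0:ℝ) (r + u) \ B with hAdef
  have hAm : MeasurableSet A := measurableSet_ball.diff hBm
  have hvolA : volume A = ENNReal.ofReal (2 * u) := by
    rw [hAdef, measure_diff (Metric.ball_subset_ball (by linarith))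
        measurableSet_ball.nullMeasurableSet (by rw [Real.volume_ball]; exact ENNReal.ofReal_ne_top),
      Real.volume_ball, Real.volume_ball, ← ENNReal.ofReal_sub _ (by linarith)]
    congr 1
    ring
  have hAle : gamma1 A ≤ ENNReal.ofReal (m / 2) := by
    have h1 : gamma1 A ≤ ENNReal.ofReal (phi r) * volume A := by
      apply gamma1_set_le hAm
      intro x hx
      have hxB : x ∉ B := hx.2
      have hxr : r ≤ |x| := by
        rw [hBdef, mem_ball_zero_iff, Real.norm_eq_abs, not_lt] at hxB; exact hxB
      exact phi_mono hxr hr.le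
    rw [hvolA, ← ENNReal.ofReal_mul hφr.le] at h1
    have : phi r * (2 * u) = m / 2 := by
      rw [hudef]; field_simp; ring
    rwa [this] at h1
  -- far set E
  set E : Set ℝ := Dp \ Metric.ball (0:ℝ) (r + u) with hEdef
  have hEm : MeasurableSet E := hDpm.diff measurableSet_ball
  have hEDp : E ⊆ Dp := Set.diff_subset
  have hDpEA : Dp ⊆ E ∪ A := by
    intro x hx
    by_cases hxb : x ∈ Metric.ball (0:ℝ) (r + u)
    · exact Or.inr ⟨hxb, hx.2⟩
    · exact Or.inl ⟨hx, hxb⟩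
  have hElower : m / 2 ≤ (gamma1 E).toReal := by
    have h1 : gamma1 Dp ≤ gamma1 E + gamma1 A :=
      le_trans (measure_mono hDpEA) (measure_union_le E A)
    have h2 : gamma1 Dp ≤ gamma1 E + ENNReal.ofReal (m / 2) :=
      le_trans h1 (add_le_add_right hAle _)
    have h3 : m ≤ (gamma1 E).toReal + m / 2 := by
      have := ENNReal.toReal_mono (by
        exact ENNReal.add_ne_top.2 ⟨hfin E, ENNReal.ofReal_ne_top⟩) h2
      rwa [ENNReal.toReal_add (hfin E) ENNReal.ofReal_ne_top,
        ENNReal.toReal_ofReal (by linarith)] at this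
    linarith
  -- lower bound for g on E
  have hgE : ∀ x ∈ E, Real.sqrt 2 * r * u ≤ g x := by
    intro x hx
    have hx1 : x ∈ Dp := hx.1
    have hx2 : x ∉ Metric.ball (0:ℝ) (r + u) := hx.2
    have hxr : r + u ≤ |x| := by
      rw [mem_ball_zero_iff, Real.norm_eq_abs, not_lt] at hx2; exact hx2
    have hx2' : (r + u) ^ 2 ≤ x ^ 2 := by nlinarith [abs_nonneg x, sq_abs x]
    have hs2 : 1 ≤ Real.sqrt 2 := by
      nlinarith [Real.sq_sqrt (by norm_num : (0:ℝ) ≤ 2), Real.sqrt_nonneg 2]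
    have hnn : (0:ℝ) ≤ x^2 - r^2 - 2*(r*u) := by nlinarith
    have := mul_nonneg (Real.sqrt_nonneg 2) hnn
    simp only [hgdef, hcdef]
    unfold sqrt2h2
    nlinarith
  have hintE : Real.sqrt 2 * r * u * (gamma1 E).toReal ≤ ∫ x in E, g x ∂gamma1 :=
    setIntegral_ge_of_const_le_real hEm (hfin E) hgE hgint.integrableOn
  have hmono : ∫ x in E, g x ∂gamma1 ≤ ∫ x in Dp, g x ∂gamma1 := by
    apply setIntegral_mono_set hgint.integrableOn
    · exact (ae_restrict_iff' hDpm).2 (ae_of_all _ hDppos)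
    · exact HasSubset.Subset.eventuallyLE hEDp
  -- combine
  have hs2 : 1 ≤ Real.sqrt 2 := by
    nlinarith [Real.sq_sqrt (by norm_num : (0:ℝ) ≤ 2), Real.sqrt_nonneg 2]
  have hsru : 0 < Real.sqrt 2 * r * u :=
    mul_pos (mul_pos (Real.sqrt_pos.2 (by norm_num)) hr) hu
  have hchain : Real.sqrt 2 * r * u * (m / 2) < ε * a := by
    have h1 : Real.sqrt 2 * r * u * (m / 2) ≤ Real.sqrt 2 * r * u * (gamma1 E).toReal :=
      mul_le_mul_of_nonneg_left hElower hsru.le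
    linarith
  -- a ≤ (4/5) r
  have har : a ≤ (4/5) * r := by
    have h1 : gamma1 B ≤ ENNReal.ofReal (phi 0) * volume B :=
      gamma1_set_le hBm (fun x _ => phi_le_phi_zero x)
    rw [hBdef, Real.volume_ball, ← ENNReal.ofReal_mul (phi_pos 0).le, ← hBdef, hB] at h1
    have h2 : a ≤ phi 0 * (2 * r) :=
      (ENNReal.ofReal_le_ofReal_iff (mul_nonneg (phi_pos 0).le (by linarith))).1 h1
    have := phi_zero_le
    nlinarith
  -- conclude m^2 < (64/25) ε
  have hm2 : m ^ 2 < (64/25) * ε := by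
    have hexp : Real.sqrt 2 * r * u * (m / 2) = Real.sqrt 2 * (r * m ^ 2) / (8 * phi r) := by
      rw [hudef]; field_simp; ring
    rw [hexp] at hchain
    have h1 : r * m ^ 2 ≤ Real.sqrt 2 * (r * m ^ 2) :=
      le_mul_of_one_le_left (mul_nonneg hr.le (sq_nonneg m)) hs2
    have h2 : Real.sqrt 2 * (r * m ^ 2) < 8 * phi r * (ε * a) := by
      rw [div_lt_iff₀ (by nlinarith : (0:ℝ) < 8 * phi r)] at hchain
      linarith [hchain]
    have h3 : 8 * phi r * (ε * a) ≤ (16/5) * (ε * a) := by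
      nlinarith [mul_nonneg (by linarith : (0:ℝ) ≤ 2/5 - phi r)
        (by positivity : (0:ℝ) ≤ 8 * (ε * a))]
    have h4 : (16/5) * (ε * a) ≤ (16/5) * ε * ((4/5) * r) := by
      nlinarith [mul_le_mul_of_nonneg_left har (by positivity : (0:ℝ) ≤ (16/5) * ε)]
    have h6 : (16/5) * ε * ((4/5) * r) = r * ((64/25) * ε) := by ring
    have h5 : r * m ^ 2 < r * ((64/25) * ε) := by
      rw [← h6]; linarith
    exact lt_of_mul_lt_mul_left h5 hr.le
  -- finish: m + m < 10 √ε
  have hmlt : m < 5 * Real.sqrt ε := by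
    nlinarith [Real.sq_sqrt hε.le, sq_nonneg (m - 5 * Real.sqrt ε), hsqε]
  linarith
end
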